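/- arXiv:2109.00719 — 5 statements merged into one kernel-verified Lean document; each statement's English description precedes it below -/
import Mathlib

section
/- Let (Ω, 𝓕, P) be a probability space with a filtration (𝓕_t)_{t∈ℕ}, and let (θ_t)_{t∈ℕ} be a Δ(S)-valued process adapted to (𝓕_t) such that θ_t(s*) > 0 almost surely for every t, and such that for every s ∈ S the ratio process (θ_t(s)/θ_t(s*))_{t∈ℕ} is a martingale with respect to (𝓕_t). Then, almost surely, the sequence (θ_t) converges to a limit θ̄ ∈ Δ(S), and moreover θ̄(s*) > 0 almost surely. (This is Lemma 1 of the paper: the Bayesian belief sequence converges with probability 1 to a fixed-point belief.) -/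
/-!
Each likelihood ratio `θ_t(s) / θ_t(s*)` is a nonnegative martingale, hence bounded in `L¹`
by its initial mean and therefore a.s. convergent, to a limit `L s` with `L s* = 1`. Since the
beliefs sum to one, `θ_t(s)` is the ratio for `s` divided by the sum of all ratios, so `θ_t`
converges to the normalisation `L / ∑ L`, whose `s*` coordinate is `1 / ∑ L > 0`.
-/

open MeasureTheory Filter Topology

namespace MeasureTheory.Supermartingale

variable {Ω : Type*} {mΩ : MeasurableSpace Ω} {P : Measure Ω} [IsFiniteMeasure P]
  {ℱ : Filtration ℕ mΩ} {f : ℕ → Ω → ℝ}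

theorem eLpNorm_one_le_integral_zero_of_nonneg (hf : Supermartingale f ℱ P)
    (hnn : ∀ n, 0 ≤ᵐ[P] f n) (n : ℕ) :
    eLpNorm (f n) 1 P ≤ ENNReal.ofReal (∫ ω, f 0 ω ∂P) := by
  rw [eLpNorm_one_eq_lintegral_enorm, ← ofReal_integral_norm_eq_lintegral_enorm (hf.integrable n),
    integral_congr_ae ((hnn n).mono fun ω hω => Real.norm_of_nonneg hω)]
  exact ENNReal.ofReal_le_ofReal
    (by simpa using hf.setIntegral_le (Nat.zero_le n) MeasurableSet.univ)

theorem exists_ae_tendsto_of_nonneg (hf : Supermartingale f ℱ P) (hnn : ∀ n, 0 ≤ᵐ[P] f n) :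
    ∀ᵐ ω ∂P, ∃ c, Tendsto (fun n => f n ω) atTop (𝓝 c) := by
  have hbdd (n : ℕ) : eLpNorm ((-f) n) 1 P ≤ ENNReal.ofReal (∫ ω, f 0 ω ∂P) := by
    simpa [eLpNorm_neg] using hf.eLpNorm_one_le_integral_zero_of_nonneg hnn n
  filter_upwards [hf.neg.exists_ae_tendsto_of_bdd hbdd] with ω ⟨c, hc⟩
  exact ⟨-c, by simpa using hc.neg⟩

end MeasureTheory.Supermartingale

namespace stdSimplex

variable {S : Type*} [Fintype S]

theorem eq_div_sum_div {x : S → ℝ} (hx : x ∈ stdSimplex ℝ S) {s₀ : S} (h : 0 < x s₀) (s : S) :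
    x s = (x s / x s₀) / ∑ s', x s' / x s₀ := by
  rw [← Finset.sum_div, hx.2, div_div_div_cancel_right₀ h.ne', div_one]

theorem exists_tendsto_of_tendsto_div {ι : Type*} {l : Filter ι} [l.NeBot] {x : ι → S → ℝ}
    (hx : ∀ i, x i ∈ stdSimplex ℝ S) {s₀ : S} (hpos : ∀ i, 0 < x i s₀)
    (hratio : ∀ s, ∃ c, Tendsto (fun i => x i s / x i s₀) l (𝓝 c)) :
    ∃ y ∈ stdSimplex ℝ S, 0 < y s₀ ∧ Tendsto x l (𝓝 y) := by
  choose L hL using hratio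
  have hL_nonneg (s : S) : 0 ≤ L s :=
    ge_of_tendsto (hL s) (Eventually.of_forall fun i => div_nonneg ((hx i).1 s) (hpos i).le)
  have hL₀ : L s₀ = 1 :=
    tendsto_nhds_unique (hL s₀) (by simp [div_self (hpos _).ne'])
  have hsum_pos : 0 < ∑ s, L s := calc
    0 < L s₀ := hL₀ ▸ one_pos
    _ ≤ ∑ s, L s := Finset.single_le_sum (fun s _ => hL_nonneg s) (Finset.mem_univ s₀)
  refine ⟨fun s => L s / ∑ s', L s', ⟨fun s => div_nonneg (hL_nonneg s) hsum_pos.le, ?_⟩,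
    div_pos (hL₀ ▸ one_pos) hsum_pos, tendsto_pi_nhds.2 fun s => ?_⟩
  · rw [← Finset.sum_div, div_self hsum_pos.ne']
  · refine ((hL s).div (tendsto_finsetSum _ fun s' _ => hL s') hsum_pos.ne').congr fun i => ?_
    exact (eq_div_sum_div (hx i) (hpos i) s).symm

end stdSimplex

theorem belief_convergence_general
    {Ω : Type*} {mΩ : MeasurableSpace Ω} {P : Measure Ω} [IsProbabilityMeasure P]
    {S : Type*} [Fintype S] (sstar : S)
    (𝓕 : Filtration ℕ mΩ)
    (θ : ℕ → Ω → S → ℝ)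
    (hΔ : ∀ t ω, θ t ω ∈ stdSimplex ℝ S)
    (hpos : ∀ t, ∀ᵐ ω ∂P, 0 < θ t ω sstar)
    (hmart : ∀ s : S, Martingale (fun t ω => θ t ω s / θ t ω sstar) 𝓕 P) :
    ∀ᵐ ω ∂P, ∃ θbar ∈ stdSimplex ℝ S,
      0 < θbar sstar ∧ Tendsto (fun t => θ t ω) atTop (nhds θbar) := by
  have hratio : ∀ᵐ ω ∂P, ∀ s, ∃ c, Tendsto (fun t => θ t ω s / θ t ω sstar) atTop (𝓝 c) :=
    ae_all_iff.2 fun s => (hmart s).supermartingale.exists_ae_tendsto_of_nonneg fun t =>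
      Eventually.of_forall fun ω => div_nonneg ((hΔ t ω).1 s) ((hΔ t ω).1 sstar)
  filter_upwards [hratio, ae_all_iff.2 hpos] with ω hω hposω
  exact stdSimplex.exists_tendsto_of_tendsto_div (hΔ · ω) hposω hω

/-- **Lemma 1 (belief convergence).** If the Δ(S)-valued adapted belief process has
`θ_t(s*) > 0` a.s. and all belief ratios `θ_t(s)/θ_t(s*)` are martingales, then almost
surely the beliefs converge to a limit `θ̄ ∈ Δ(S)` with `θ̄(s*) > 0`. -/
theorem belief_convergence
    {Ω : Type*} {mΩ : MeasurableSpace Ω} {P : Measure Ω} [IsProbabilityMeasure P]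
    {S : Type*} [Fintype S] (sstar : S)
    (𝓕 : Filtration ℕ mΩ)
    (θ : ℕ → Ω → S → ℝ)
    (hΔ : ∀ t ω, θ t ω ∈ stdSimplex ℝ S)
    (hadapted : ∀ s : S, Adapted 𝓕 (fun t ω => θ t ω s))
    (hpos : ∀ t, ∀ᵐ ω ∂P, 0 < θ t ω sstar)
    (hmart : ∀ s : S, Martingale (fun t ω => θ t ω s / θ t ω sstar) 𝓕 P) :
    ∀ᵐ ω ∂P, ∃ θbar ∈ stdSimplex ℝ S,
      0 < θbar sstar ∧ Tendsto (fun t => θ t ω) atTop (nhds θbar) :=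
  belief_convergence_general sstar 𝓕 θ hΔ hpos hmart
end

section
/- Let θ¹ ∈ Δ(S) with θ¹(s) > 0 for all s ∈ S, and for each j ≥ 1 let ℓ_j : S → (0,∞) be positive likelihood values. Define the Bayesian posterior sequence θ^t(s) := θ¹(s) ∏_{j=1}^{t−1} ℓ_j(s) / ( Σ_{s'∈S} θ¹(s') ∏_{j=1}^{t−1} ℓ_j(s') ) for t ≥ 1. Fix s ∈ S and D ∈ ℝ, and suppose: (a) there is a constant c > 0 with θ^t(s*) ≥ c for all t; and (b) (1/t) Σ_{j=1}^{t} log( ℓ_j(s)/ℓ_j(s*) ) → −D as t → ∞. Then (1/t) log θ^t(s) → −D as t → ∞. (This is the deterministic core of the exponential-rate claim in Theorem 1/Lemma 3: the posterior probability of a non-payoff-equivalent parameter decays exponentially at the rate given by the limiting average log-likelihood ratio.) -/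
open Filter Finset

/-
Posterior odds factor through the data: `θ^t(s) / θ^t(s*)` is the prior odds times the product of
the likelihood ratios, so `log θ^t(s) = log θ^t(s*) + log (θ¹(s) / θ¹(s*)) + Σ_{j<t} log (ℓ_j(s) / ℓ_j(s*))`.
The first two terms stay bounded (`c ≤ θ^t(s*) ≤ 1`), so after dividing by `t` only the average
log-likelihood ratio survives.
-/

lemma tendsto_one_div_mul_log_of_le_of_le_one {x : ℕ → ℝ} {c : ℝ} (hc : 0 < c)
    (hcx : ∀ t, c ≤ x t) (hx1 : ∀ t, x t ≤ 1) :
    Tendsto (fun t : ℕ => 1 / (t : ℝ) * Real.log (x t)) atTop (nhds 0) := by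
  refine tendsto_one_div_atTop_nhds_zero_nat.zero_mul_isBoundedUnder_le
    (isBoundedUnder_of ⟨-Real.log c, fun t => ?_⟩)
  have hlog_nonpos : Real.log (x t) ≤ 0 := Real.log_nonpos (hc.trans_le (hcx t)).le (hx1 t)
  have hlog_ge : Real.log c ≤ Real.log (x t) := Real.log_le_log hc (hcx t)
  simp only [Function.comp_apply, Real.norm_eq_abs, abs_of_nonpos hlog_nonpos]
  linarith

section Posterior

variable {S : Type*} [Fintype S]

noncomputable def posterior (θ1 : S → ℝ) (ℓ : ℕ → S → ℝ) (t : ℕ) (s : S) : ℝ :=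
  θ1 s * (∏ j ∈ range t, ℓ j s) / ∑ s', θ1 s' * ∏ j ∈ range t, ℓ j s'

variable {θ1 : S → ℝ} {ℓ : ℕ → S → ℝ}

lemma posterior_pos (hθ1 : ∀ s, 0 < θ1 s) (hℓ : ∀ j s, 0 < ℓ j s) (t : ℕ) (s : S) :
    0 < posterior θ1 ℓ t s := by
  have hweight : ∀ s', 0 < θ1 s' * ∏ j ∈ range t, ℓ j s' := fun s' =>
    mul_pos (hθ1 s') (prod_pos fun j _ => hℓ j s')
  exact div_pos (hweight s) (sum_pos (fun s' _ => hweight s') ⟨s, mem_univ s⟩)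

lemma posterior_le_one (hθ1 : ∀ s, 0 < θ1 s) (hℓ : ∀ j s, 0 < ℓ j s) (t : ℕ) (s : S) :
    posterior θ1 ℓ t s ≤ 1 := by
  have hweight : ∀ s', 0 ≤ θ1 s' * ∏ j ∈ range t, ℓ j s' := fun s' =>
    mul_nonneg (hθ1 s').le (prod_nonneg fun j _ => (hℓ j s').le)
  exact div_le_one_of_le₀ (single_le_sum (fun s' _ => hweight s') (mem_univ s))
    (sum_nonneg fun s' _ => hweight s')

lemma posterior_div_posterior (hθ1 : ∀ s, 0 < θ1 s) (hℓ : ∀ j s, 0 < ℓ j s) (t : ℕ) (s s' : S) :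
    posterior θ1 ℓ t s / posterior θ1 ℓ t s'
      = θ1 s / θ1 s' * ∏ j ∈ range t, ℓ j s / ℓ j s' := by
  have hnormalizer : (∑ s'', θ1 s'' * ∏ j ∈ range t, ℓ j s'') ≠ 0 :=
    (sum_pos (fun s'' _ => mul_pos (hθ1 s'') (prod_pos fun j _ => hℓ j s''))
      ⟨s, mem_univ s⟩).ne'
  rw [posterior, posterior, div_div_div_cancel_right₀ hnormalizer, mul_div_mul_comm,
    prod_div_distrib]

lemma log_posterior_eq (hθ1 : ∀ s, 0 < θ1 s) (hℓ : ∀ j s, 0 < ℓ j s) (t : ℕ) (s s' : S) :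
    Real.log (posterior θ1 ℓ t s)
      = Real.log (posterior θ1 ℓ t s') + Real.log (θ1 s / θ1 s')
        + ∑ j ∈ range t, Real.log (ℓ j s / ℓ j s') := by
  have hratio := congrArg Real.log (posterior_div_posterior hθ1 hℓ t s s')
  rw [Real.log_div (posterior_pos hθ1 hℓ t s).ne' (posterior_pos hθ1 hℓ t s').ne',
    Real.log_mul (div_pos (hθ1 s) (hθ1 s')).ne'
      (prod_pos fun j _ => div_pos (hℓ j s) (hℓ j s')).ne',
    Real.log_prod fun j _ => (div_pos (hℓ j s) (hℓ j s')).ne'] at hratio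
  linarith

end Posterior

theorem posterior_exponential_rate_general
    {S : Type*} [Fintype S] (sstar s : S)
    (θ1 : S → ℝ) (hθ1pos : ∀ s', 0 < θ1 s')
    (ℓ : ℕ → S → ℝ) (hℓ : ∀ j s', 0 < ℓ j s')
    (D : ℝ)
    (post : ℕ → S → ℝ)
    (hpost : ∀ t s', post t s'
      = θ1 s' * (∏ j ∈ Finset.range t, ℓ j s')
        / (∑ s'', θ1 s'' * ∏ j ∈ Finset.range t, ℓ j s''))
    (c : ℝ) (hc : 0 < c) (hlb : ∀ t, c ≤ post t sstar)
    (hrate : Tendsto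
      (fun t : ℕ => (1 / (t : ℝ)) * ∑ j ∈ Finset.range t, Real.log (ℓ j s / ℓ j sstar))
      atTop (nhds (-D))) :
    Tendsto (fun t : ℕ => (1 / (t : ℝ)) * Real.log (post t s)) atTop (nhds (-D)) := by
  obtain rfl : post = posterior θ1 ℓ := funext₂ hpost
  have htrue : Tendsto (fun t : ℕ => 1 / (t : ℝ) * Real.log (posterior θ1 ℓ t sstar))
      atTop (nhds 0) :=
    tendsto_one_div_mul_log_of_le_of_le_one hc hlb (posterior_le_one hθ1pos hℓ · sstar)
  have hprior : Tendsto (fun t : ℕ => 1 / (t : ℝ) * Real.log (θ1 s / θ1 sstar))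
      atTop (nhds 0) := by
    simpa using tendsto_one_div_atTop_nhds_zero_nat.mul_const (Real.log (θ1 s / θ1 sstar))
  simpa [log_posterior_eq hθ1pos hℓ _ s sstar, mul_add] using (htrue.add hprior).add hrate

/-- **Exponential decay rate of posterior beliefs (deterministic core of Lemma 3).**
If the Bayesian posterior keeps the true parameter's probability bounded away from `0`
and the average log-likelihood ratio of `s` against `s*` tends to `−D`, then
`(1/t) log θ^t(s) → −D`. -/
theorem posterior_exponential_rate
    {S : Type*} [Fintype S] (sstar s : S)
    (θ1 : S → ℝ) (hθ1 : θ1 ∈ stdSimplex ℝ S) (hθ1pos : ∀ s', 0 < θ1 s')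
    (ℓ : ℕ → S → ℝ) (hℓ : ∀ j s', 0 < ℓ j s')
    (D : ℝ)
    (post : ℕ → S → ℝ)
    (hpost : ∀ t s', post t s'
      = θ1 s' * (∏ j ∈ Finset.range t, ℓ j s')
        / (∑ s'', θ1 s'' * ∏ j ∈ Finset.range t, ℓ j s''))
    (c : ℝ) (hc : 0 < c) (hlb : ∀ t, c ≤ post t sstar)
    (hrate : Tendsto
      (fun t : ℕ => (1 / (t : ℝ)) * ∑ j ∈ Finset.range t, Real.log (ℓ j s / ℓ j sstar))
      atTop (nhds (-D))) :
    Tendsto (fun t : ℕ => (1 / (t : ℝ)) * Real.log (post t s)) atTop (nhds (-D)) :=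
  posterior_exponential_rate_general sstar s θ1 hθ1pos ℓ hℓ D post hpost c hc hlb hrate
end

section
/- Let (Ω, 𝓕, P) be a probability space with filtration (𝓕_t)_{t∈ℕ}, and let (θ_t) be a Δ(S)-valued adapted process with θ_t(s*) > 0 a.s. such that for each s ∈ S the ratio process (θ_t(s)/θ_t(s*)) is a martingale. Let B ⊆ S \ {s*}, and let α ∈ (0,1) and ρ₁, ρ₂ > 0 satisfy ρ₁/α < ρ₂. Suppose that almost surely θ_0(s) < ρ₁ for every s ∈ B and θ_0(s*) > α. Then P( θ_t(s) ≤ ρ₂ for every s ∈ B and every t ∈ ℕ ) ≥ 1 − |B| · (ρ₁/α) / (ρ₂ − ρ₁/α). (This is the generic form of the paper's stopping-time lemma: if the initial beliefs of parameters outside the support of a fixed-point belief are small, then with high probability they remain small forever.) -/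
open MeasureTheory
open scoped ENNReal NNReal

/-!
For `s ∈ B` the likelihood ratio `θ_t(s) / θ_t(s*)` is a nonnegative martingale which starts
below `ρ₁/α` and dominates `θ_t(s)`, since `θ_t(s*) ≤ 1`. Doob's maximal inequality, passed to
the limit over finite horizons (Ville's inequality), bounds the probability that `θ_t(s)` ever
exceeds `ρ₂` by `(ρ₁/α)/ρ₂ ≤ (ρ₁/α)/(ρ₂ - ρ₁/α)`; a union bound over `B` concludes.
-/

namespace MeasureTheory

variable {Ω : Type*} {mΩ : MeasurableSpace Ω} {P : Measure Ω}

lemma one_sub_measure_compl_le [IsProbabilityMeasure P] (s : Set Ω) : 1 - P sᶜ ≤ P s :=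
  tsub_le_iff_right.2 (by simpa using measure_univ_le_add_compl (μ := P) s)

variable [IsFiniteMeasure P] {𝓕 : Filtration ℕ mΩ} {f : ℕ → Ω → ℝ}

theorem Submartingale.mul_measure_exists_ge_le (hf : Submartingale f 𝓕 P) (hnonneg : 0 ≤ f)
    {C : ℝ} (hC : ∀ n, ∫ ω, f n ω ∂P ≤ C) (ε : ℝ≥0) :
    ε * P {ω | ∃ n, (ε : ℝ) ≤ f n ω} ≤ ENNReal.ofReal C := by
  set D : ℕ → Set Ω := fun n =>
    {ω | (ε : ℝ) ≤ (Finset.range (n + 1)).sup' Finset.nonempty_range_add_one fun k => f k ω}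
  have hD : {ω | ∃ n, (ε : ℝ) ≤ f n ω} = ⋃ n, D n := by
    ext ω
    simp only [D, Set.mem_ofPred_eq, Set.mem_iUnion, Finset.le_sup'_iff, Finset.mem_range]
    exact ⟨fun ⟨n, hn⟩ => ⟨n, n, n.lt_succ_self, hn⟩, fun ⟨_, k, _, hk⟩ => ⟨k, hk⟩⟩
  have hD_mono : Monotone D := fun m n hmn ω (hω : (ε : ℝ) ≤ _) =>
    hω.trans (Finset.sup'_mono _ (Finset.range_subset_range.2 (by omega)) _)
  rw [hD, hD_mono.measure_iUnion, ENNReal.mul_iSup]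
  refine iSup_le fun n => (maximal_ineq hf hnonneg n).trans (ENNReal.ofReal_le_ofReal ?_)
  exact (setIntegral_le_integral (hf.integrable n) (.of_forall (hnonneg n))).trans (hC n)

theorem Martingale.measure_exists_ge_le (hf : Martingale f 𝓕 P) (hnonneg : 0 ≤ f) {ε : ℝ}
    (hε : 0 < ε) :
    P {ω | ∃ n, ε ≤ f n ω} ≤ ENNReal.ofReal ((∫ ω, f 0 ω ∂P) / ε) := by
  have hC : ∀ n, ∫ ω, f n ω ∂P ≤ ∫ ω, f 0 ω ∂P := fun n => by
    simpa only [setIntegral_univ] using (hf.setIntegral_eq n.zero_le .univ).ge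
  have h := hf.submartingale.mul_measure_exists_ge_le hnonneg hC ε.toNNReal
  rw [Real.coe_toNNReal _ hε.le] at h
  change ENNReal.ofReal ε * _ ≤ _ at h
  rw [ENNReal.ofReal_div_of_pos hε, ENNReal.le_div_iff_mul_le (.inl (by simpa using hε))
    (.inl ENNReal.ofReal_ne_top), mul_comm]
  exact h

end MeasureTheory

lemma le_div_apply_of_mem_stdSimplex {S : Type*} [Fintype S] {x : S → ℝ}
    (hx : x ∈ stdSimplex ℝ S) (i : S) {j : S} (hj : 0 < x j) : x i ≤ x i / x j := by
  rw [le_div_iff₀ hj]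
  exact mul_le_of_le_one_right (hx.1 i) (stdSimplex.le_one ⟨x, hx⟩ j)

theorem measure_exists_belief_gt_le {Ω : Type*} {mΩ : MeasurableSpace Ω} {P : Measure Ω}
    [IsProbabilityMeasure P] {S : Type*} [Fintype S] {𝓕 : Filtration ℕ mΩ}
    {θ : ℕ → Ω → S → ℝ} {sstar s : S} (hΔ : ∀ t ω, θ t ω ∈ stdSimplex ℝ S)
    (hpos : ∀ t, ∀ᵐ ω ∂P, 0 < θ t ω sstar)
    (hmart : Martingale (fun t ω => θ t ω s / θ t ω sstar) 𝓕 P) {q ρ : ℝ}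
    (hinit : ∀ᵐ ω ∂P, θ 0 ω s / θ 0 ω sstar ≤ q) (hρ : 0 < ρ) :
    P {ω | ∃ t, ρ < θ t ω s} ≤ ENNReal.ofReal (q / ρ) := by
  have hnonneg : 0 ≤ fun t ω => θ t ω s / θ t ω sstar := fun t ω =>
    div_nonneg ((hΔ t ω).1 s) ((hΔ t ω).1 sstar)
  have hsub : {ω | ∃ t, ρ < θ t ω s} ≤ᵐ[P] {ω | ∃ t, ρ ≤ θ t ω s / θ t ω sstar} := by
    filter_upwards [ae_all_iff.2 hpos] with ω hω ⟨t, ht⟩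
    exact ⟨t, ht.le.trans (le_div_apply_of_mem_stdSimplex (hΔ t ω) s (hω t))⟩
  have hmean : ∫ ω, θ 0 ω s / θ 0 ω sstar ∂P ≤ q := by
    simpa using integral_mono_ae (hmart.integrable 0) (integrable_const q) hinit
  calc P {ω | ∃ t, ρ < θ t ω s} ≤ P {ω | ∃ t, ρ ≤ θ t ω s / θ t ω sstar} := measure_mono_ae hsub
    _ ≤ ENNReal.ofReal ((∫ ω, θ 0 ω s / θ 0 ω sstar ∂P) / ρ) :=
        hmart.measure_exists_ge_le hnonneg hρ
    _ ≤ ENNReal.ofReal (q / ρ) := ENNReal.ofReal_le_ofReal (by gcongr)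

theorem beliefs_stay_small_general
    {Ω : Type*} {mΩ : MeasurableSpace Ω} {P : Measure Ω} [IsProbabilityMeasure P]
    {S : Type*} [Fintype S] (sstar : S)
    (𝓕 : Filtration ℕ mΩ)
    (θ : ℕ → Ω → S → ℝ)
    (hΔ : ∀ t ω, θ t ω ∈ stdSimplex ℝ S)
    (hpos : ∀ t, ∀ᵐ ω ∂P, 0 < θ t ω sstar)
    (hmart : ∀ s : S, Martingale (fun t ω => θ t ω s / θ t ω sstar) 𝓕 P)
    (B : Finset S)
    (α ρ1 ρ2 : ℝ) (hα0 : 0 < α) (hρ1 : 0 < ρ1)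
    (hratio : ρ1 / α < ρ2)
    (hinit : ∀ᵐ ω ∂P, (∀ s ∈ B, θ 0 ω s < ρ1) ∧ α < θ 0 ω sstar) :
    ENNReal.ofReal (1 - (B.card : ℝ) * (ρ1 / α) / (ρ2 - ρ1 / α))
      ≤ P {ω | ∀ s ∈ B, ∀ t, θ t ω s ≤ ρ2} := by
  set q := ρ1 / α
  have hq : 0 < q := div_pos hρ1 hα0
  have hρ2 : 0 < ρ2 := hq.trans hratio
  have hbelief (s : S) (hs : s ∈ B) : P {ω | ∃ t, ρ2 < θ t ω s} ≤ ENNReal.ofReal (q / ρ2) :=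
    measure_exists_belief_gt_le hΔ hpos (hmart s)
      (hinit.mono fun _ h => div_le_div₀ hρ1.le (h.1 s hs).le hα0 h.2.le) hρ2
  have hfail : P {ω | ∀ s ∈ B, ∀ t, θ t ω s ≤ ρ2}ᶜ ≤ ENNReal.ofReal (B.card * (q / ρ2)) :=
    calc P {ω | ∀ s ∈ B, ∀ t, θ t ω s ≤ ρ2}ᶜ ≤ P (⋃ s ∈ B, {ω | ∃ t, ρ2 < θ t ω s}) :=
          measure_mono fun ω => by simp
      _ ≤ ∑ s ∈ B, P {ω | ∃ t, ρ2 < θ t ω s} := measure_biUnion_finset_le _ _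
      _ ≤ ∑ _s ∈ B, ENNReal.ofReal (q / ρ2) := Finset.sum_le_sum hbelief
      _ = ENNReal.ofReal (B.card * (q / ρ2)) := by
          rw [Finset.sum_const, nsmul_eq_mul, ENNReal.ofReal_mul (by positivity),
            ENNReal.ofReal_natCast]
  calc ENNReal.ofReal (1 - B.card * q / (ρ2 - q))
      ≤ ENNReal.ofReal (1 - B.card * (q / ρ2)) := by
        refine ENNReal.ofReal_le_ofReal (sub_le_sub_left ?_ 1)
        rw [mul_div_assoc]
        gcongr
        linarith
    _ = 1 - ENNReal.ofReal (B.card * (q / ρ2)) := by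
        rw [ENNReal.ofReal_sub _ (by positivity), ENNReal.ofReal_one]
    _ ≤ 1 - P {ω | ∀ s ∈ B, ∀ t, θ t ω s ≤ ρ2}ᶜ := tsub_le_tsub_left hfail 1
    _ ≤ P {ω | ∀ s ∈ B, ∀ t, θ t ω s ≤ ρ2} := one_sub_measure_compl_le _

/-- **Stopping-time lemma (generic form).** If initially the beliefs of all parameters
in `B ⊆ S \ {s*}` are below `ρ₁` and the belief of the true parameter exceeds `α`, then
with probability at least `1 − |B| (ρ₁/α)/(ρ₂ − ρ₁/α)` the beliefs of all parameters in
`B` stay below `ρ₂` forever. -/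
theorem beliefs_stay_small
    {Ω : Type*} {mΩ : MeasurableSpace Ω} {P : Measure Ω} [IsProbabilityMeasure P]
    {S : Type*} [Fintype S] (sstar : S)
    (𝓕 : Filtration ℕ mΩ)
    (θ : ℕ → Ω → S → ℝ)
    (hΔ : ∀ t ω, θ t ω ∈ stdSimplex ℝ S)
    (hadapted : ∀ s : S, Adapted 𝓕 (fun t ω => θ t ω s))
    (hpos : ∀ t, ∀ᵐ ω ∂P, 0 < θ t ω sstar)
    (hmart : ∀ s : S, Martingale (fun t ω => θ t ω s / θ t ω sstar) 𝓕 P)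
    (B : Finset S) (hB : sstar ∉ B)
    (α ρ1 ρ2 : ℝ) (hα0 : 0 < α) (hα1 : α < 1) (hρ1 : 0 < ρ1) (hρ2 : 0 < ρ2)
    (hratio : ρ1 / α < ρ2)
    (hinit : ∀ᵐ ω ∂P, (∀ s ∈ B, θ 0 ω s < ρ1) ∧ α < θ 0 ω sstar) :
    ENNReal.ofReal (1 - (B.card : ℝ) * (ρ1 / α) / (ρ2 - ρ1 / α))
      ≤ P {ω | ∀ s ∈ B, ∀ t, θ t ω s ≤ ρ2} :=
  beliefs_stay_small_general sstar 𝓕 θ hΔ hpos hmart B α ρ1 ρ2 hα0 hρ1 hratio hinit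
end

section
/- Suppose each Q_i is convex. Let θ̄ ∈ Δ(S) and let q̄ ∈ EQ(θ̄) be a Nash equilibrium of the expected game with payoffs Σ_s θ̄(s) u_i^s. Assume: (i) there exists ξ > 0 such that for every q ∈ Q with ‖q − q̄‖ < ξ and every player i, Σ_{s∈S} θ̄(s) u_i^s(q) = u_i^{s*}(q); and (ii) for every player i and every s ∈ supp θ̄ ∪ {s*}, the map q_i ↦ u_i^s(q_i, q̄_{−i}) is concave on Q_i. Then q̄ is a Nash equilibrium of the complete-information game with payoffs u_i^{s*}: for every i and every q_i' ∈ Q_i, u_i^{s*}(q̄) ≥ u_i^{s*}(q_i', q̄_{−i}). (This is the second part of Proposition 1: under local payoff equivalence and concavity, a fixed-point strategy is a complete information equilibrium.) -/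
/-!
Near `q̄` the expected payoff and the true payoff `u_i^{s*}` agree, so a profitable deviation
from `q̄` in the expected game is the same as one in the complete-information game as long as
it stays close to `q̄`. Hence `q̄_i` is a local maximiser of the true payoff in own strategy,
and concavity on the convex set `Q_i` upgrades the local maximum to a global one.
-/

open Filter Function Set Topology

theorem isLocalMaxOn_update_of_eqOn_nhds {ι : Type*} [DecidableEq ι] {E : ι → Type*}
    [∀ i, TopologicalSpace (E i)] {Q : ∀ i, Set (E i)} {f g : (∀ i, E i) → ℝ}
    {p : ∀ i, E i} (hp : p ∈ pi univ Q) {U : Set (∀ i, E i)} (hU : U ∈ 𝓝 p)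
    (hfg : EqOn f g (U ∩ pi univ Q)) {i : ι} (hbest : ∀ x ∈ Q i, f (update p i x) ≤ f p) :
    IsLocalMaxOn (fun x => g (update p i x)) (Q i) (p i) := by
  have hcont : Continuous (update p i) := continuous_const.update i continuous_id
  have htendsto : Tendsto (update p i) (𝓝[Q i] (p i)) (𝓝 p) := by
    simpa only [update_eq_self] using (hcont.tendsto (p i)).mono_left nhdsWithin_le_nhds
  filter_upwards [htendsto hU, self_mem_nhdsWithin] with x hxU hxQ
  have hmem : update p i x ∈ pi univ Q := (update_mem_pi_iff_of_mem hp).2 fun _ => hxQ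
  calc g (update p i x) = f (update p i x) := (hfg ⟨hxU, hmem⟩).symm
    _ ≤ f p := hbest x hxQ
    _ = g (update p i (p i)) := by rw [update_eq_self]; exact hfg ⟨mem_of_mem_nhds hU, hp⟩

theorem fixed_point_is_complete_information_equilibrium_general
    {S : Type*} [Fintype S] (sstar : S)
    {I : Type*} [Fintype I] [DecidableEq I] {n : I → ℕ}
    (Q : ∀ i, Set (Fin (n i) → ℝ))
    (u : I → S → (∀ i, Fin (n i) → ℝ) → ℝ)
    (θbar : S → ℝ)
    (qbar : ∀ i, Fin (n i) → ℝ)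
    (hqQ : qbar ∈ Set.pi Set.univ Q)
    (hNash : ∀ i, ∀ x ∈ Q i,
      (∑ s, θbar s * u i s (Function.update qbar i x)) ≤ ∑ s, θbar s * u i s qbar)
    (ξ : ℝ) (hξ : 0 < ξ)
    (hloc : ∀ q ∈ Set.pi Set.univ Q, ‖q - qbar‖ < ξ →
      ∀ i, (∑ s, θbar s * u i s q) = u i sstar q)
    (hconc : ∀ i, ∀ s, (0 < θbar s ∨ s = sstar) →
      ConcaveOn ℝ (Q i) (fun x => u i s (Function.update qbar i x))) :
    ∀ i, ∀ x ∈ Q i, u i sstar (Function.update qbar i x) ≤ u i sstar qbar := by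
  intro i x hx
  have hagree : EqOn (fun q => ∑ s, θbar s * u i s q) (u i sstar)
      (Metric.ball qbar ξ ∩ pi univ Q) := fun q ⟨hq, hqQ'⟩ =>
    hloc q hqQ' (by rwa [Metric.mem_ball, dist_eq_norm] at hq) i
  have hlocal : IsLocalMaxOn (fun x => u i sstar (update qbar i x)) (Q i) (qbar i) :=
    isLocalMaxOn_update_of_eqOn_nhds hqQ (Metric.ball_mem_nhds qbar hξ) hagree (hNash i)
  have hglobal := IsMaxOn.of_isLocalMaxOn_of_concaveOn (hqQ i (mem_univ i)) hlocal
    (hconc i sstar (Or.inr rfl))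
  simpa only [mem_ofPred_eq, update_eq_self] using hglobal hx

/-- **Proposition 1 (second part).** Let `q̄ ∈ EQ(θ̄)` be an equilibrium of the expected
game. If (i) the expected payoff coincides with the true payoff `u_i^{s*}` for all
profiles in `Q` within distance `ξ` of `q̄`, and (ii) for every player `i` and every
parameter in `supp θ̄ ∪ {s*}` the payoff is concave in own strategy at `q̄_{−i}`, then
`q̄` is a Nash equilibrium of the complete-information game with payoffs `u_i^{s*}`. -/
theorem fixed_point_is_complete_information_equilibrium
    {S : Type*} [Fintype S] (sstar : S)
    {I : Type*} [Fintype I] [DecidableEq I] {n : I → ℕ}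
    (Q : ∀ i, Set (Fin (n i) → ℝ)) (hconv : ∀ i, Convex ℝ (Q i))
    (u : I → S → (∀ i, Fin (n i) → ℝ) → ℝ)
    (θbar : S → ℝ) (hθ : θbar ∈ stdSimplex ℝ S)
    (qbar : ∀ i, Fin (n i) → ℝ)
    (hqQ : qbar ∈ Set.pi Set.univ Q)
    (hNash : ∀ i, ∀ x ∈ Q i,
      (∑ s, θbar s * u i s (Function.update qbar i x)) ≤ ∑ s, θbar s * u i s qbar)
    (ξ : ℝ) (hξ : 0 < ξ)
    (hloc : ∀ q ∈ Set.pi Set.univ Q, ‖q - qbar‖ < ξ →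
      ∀ i, (∑ s, θbar s * u i s q) = u i sstar q)
    (hconc : ∀ i, ∀ s, (0 < θbar s ∨ s = sstar) →
      ConcaveOn ℝ (Q i) (fun x => u i s (Function.update qbar i x))) :
    ∀ i, ∀ x ∈ Q i, u i sstar (Function.update qbar i x) ≤ u i sstar qbar :=
  fixed_point_is_complete_information_equilibrium_general sstar Q u θbar qbar hqQ hNash ξ hξ hloc
    hconc
end

section
/- Consider the two-player zero-sum game with strategy sets Q_1 = Q_2 = [0,6], parameter set S = {1,3,5}, and value function v^s(q) = (max(|q_1 − q_2|, s) − s)² − 2 q_1², where player 1's payoff is v^s and player 2's payoff is −v^s. Then for every θ ∈ Δ(S), the set of Nash equilibria of the expected game with value Σ_{s∈S} θ(s) v^s is exactly { (q_1, q_2) ∈ [0,6]² : q_1 = 0 and q_2 ≤ min(supp θ) }. (This is the equilibrium characterization underlying Example 2.) -/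
/-!
As every `s` is nonnegative, the expected payoff `F` satisfies `F(q, q) = -2 q²` and `F(0, y) ≥ 0`.
At an equilibrium player 1 may deviate to `0` and player 2 to `q₁`, which squeezes
`0 ≤ F(q₁, q₂) ≤ -2 q₁²`; hence `q₁ = 0` and `F(0, q₂) = 0`, which forces `q₂ ≤ s` on the support
of `θ`. Conversely, if `q₂ ≤ s` on the support then `v^s(x, q₂) ≤ x² - 2 x² ≤ 0` for `x ≥ 0`,
so `(0, q₂)` is a saddle point of value `0`.
-/

/-- Player 1's payoff in the zero-sum game with parameter value `s`. -/
noncomputable def zsVal (s q1 q2 : ℝ) : ℝ := (max |q1 - q2| s - s) ^ 2 - 2 * q1 ^ 2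

/-- The three possible values of the unknown parameter. -/
noncomputable def zsS : Fin 3 → ℝ := ![1, 3, 5]

open Finset Set

/-- `f` is player 1's payoff; player 2 receives `-f`. -/
def IsZeroSumEquilibriumOn {α β γ : Type*} [Preorder γ] (X : Set α) (Y : Set β)
    (f : α → β → γ) (a : α) (b : β) : Prop :=
  a ∈ X ∧ b ∈ Y ∧ (∀ x ∈ X, f x b ≤ f a b) ∧ ∀ y ∈ Y, f a b ≤ f a y

lemma zsVal_self {s : ℝ} (hs : 0 ≤ s) (q : ℝ) : zsVal s q q = -2 * q ^ 2 := by
  simp [zsVal, hs]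

lemma zsVal_zero_left_nonneg (s y : ℝ) : 0 ≤ zsVal s 0 y := by
  simp only [zsVal]
  nlinarith [sq_nonneg (max |0 - y| s - s)]

lemma zsVal_zero_left_eq_zero_iff (s y : ℝ) : zsVal s 0 y = 0 ↔ |y| ≤ s := by
  simp [zsVal, sub_eq_zero]

lemma zsVal_nonpos {s x y : ℝ} (hx : 0 ≤ x) (hy : 0 ≤ y) (hys : y ≤ s) : zsVal s x y ≤ 0 := by
  have hdist : |x - y| ≤ x + s := abs_sub_le_iff.2 ⟨by linarith, by linarith⟩
  have hgap : (max |x - y| s - s) ^ 2 ≤ x ^ 2 :=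
    pow_le_pow_left₀ (sub_nonneg.2 (le_max_right _ _))
      (sub_le_iff_le_add.2 (max_le hdist (by linarith))) 2
  simp only [zsVal]
  nlinarith

section Expected

variable {ι : Type*} [Fintype ι]

noncomputable def expectedZsVal (θ σ : ι → ℝ) (x y : ℝ) : ℝ := ∑ i, θ i * zsVal (σ i) x y

variable {θ σ : ι → ℝ}

lemma expectedZsVal_self (hθ : θ ∈ stdSimplex ℝ ι) (hσ : ∀ i, 0 ≤ σ i) (q : ℝ) :
    expectedZsVal θ σ q q = -2 * q ^ 2 := by
  simp only [expectedZsVal, zsVal_self (hσ _), ← Finset.sum_mul, hθ.2, one_mul]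

lemma expectedZsVal_zero_left_nonneg (hθ : ∀ i, 0 ≤ θ i) (y : ℝ) :
    0 ≤ expectedZsVal θ σ 0 y :=
  sum_nonneg fun i _ => mul_nonneg (hθ i) (zsVal_zero_left_nonneg _ _)

lemma expectedZsVal_zero_left_eq_zero_iff (hθ : ∀ i, 0 ≤ θ i) {y : ℝ} (hy : 0 ≤ y) :
    expectedZsVal θ σ 0 y = 0 ↔ ∀ i, 0 < θ i → y ≤ σ i := by
  rw [expectedZsVal, sum_eq_zero_iff_of_nonneg fun i _ =>
    mul_nonneg (hθ i) (zsVal_zero_left_nonneg _ _)]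
  simp only [Finset.mem_univ, true_implies, mul_eq_zero, zsVal_zero_left_eq_zero_iff,
    abs_of_nonneg hy]
  exact forall_congr' fun i => by rw [(hθ i).lt_iff_ne', ← or_iff_not_imp_left]

lemma expectedZsVal_nonpos (hθ : ∀ i, 0 ≤ θ i) {x y : ℝ} (hx : 0 ≤ x) (hy : 0 ≤ y)
    (hyσ : ∀ i, 0 < θ i → y ≤ σ i) : expectedZsVal θ σ x y ≤ 0 := by
  refine sum_nonpos fun i _ => ?_
  rcases (hθ i).eq_or_lt with h | h
  · simp [← h]
  · exact mul_nonpos_of_nonneg_of_nonpos h.le (zsVal_nonpos hx hy (hyσ i h))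

lemma le_sInf_support_iff (hθ : θ ∈ stdSimplex ℝ ι) {y : ℝ} :
    y ≤ sInf {x | ∃ i, 0 < θ i ∧ σ i = x} ↔ ∀ i, 0 < θ i → y ≤ σ i := by
  obtain ⟨i₀, -, hi₀⟩ := exists_lt_of_sum_lt (f := fun _ => (0 : ℝ)) (g := θ) (s := univ)
    (by simp [hθ.2])
  have hbdd : BddBelow {x | ∃ i, 0 < θ i ∧ σ i = x} :=
    (Set.finite_range σ).bddBelow.mono (by rintro _ ⟨i, -, rfl⟩; exact Set.mem_range_self i)
  have hne : Set.Nonempty {x | ∃ i, 0 < θ i ∧ σ i = x} := ⟨σ i₀, i₀, hi₀, rfl⟩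
  rw [le_csInf_iff hbdd hne]
  simp

theorem isZeroSumEquilibriumOn_expectedZsVal_iff (hθ : θ ∈ stdSimplex ℝ ι)
    (hσ : ∀ i, 0 ≤ σ i) {b q₁ q₂ : ℝ} :
    IsZeroSumEquilibriumOn (Icc 0 b) (Icc 0 b) (expectedZsVal θ σ) q₁ q₂ ↔
      q₁ = 0 ∧ q₂ ∈ Icc 0 b ∧ ∀ i, 0 < θ i → q₂ ≤ σ i := by
  constructor
  · rintro ⟨hq₁, hq₂, hbest₁, hbest₂⟩
    have hzero := expectedZsVal_zero_left_nonneg hθ.1 (σ := σ) q₂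
    have hdev₁ := hbest₁ 0 ⟨le_rfl, hq₁.1.trans hq₁.2⟩
    have hdev₂ := hbest₂ q₁ hq₁
    rw [expectedZsVal_self hθ hσ] at hdev₂
    obtain rfl : q₁ = 0 := by nlinarith
    exact ⟨rfl, hq₂, (expectedZsVal_zero_left_eq_zero_iff hθ.1 hq₂.1).1 (by linarith)⟩
  · rintro ⟨rfl, hq₂, hσq₂⟩
    have hval := (expectedZsVal_zero_left_eq_zero_iff hθ.1 hq₂.1).2 hσq₂
    refine ⟨⟨le_rfl, hq₂.1.trans hq₂.2⟩, hq₂, fun x hx => ?_, fun y _ => ?_⟩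
    · rw [hval]; exact expectedZsVal_nonpos hθ.1 hx.1 hq₂.1 hσq₂
    · rw [hval]; exact expectedZsVal_zero_left_nonneg hθ.1 y

end Expected

/-- **Example 2 (zero-sum game equilibria).** For every belief `θ` on `S = {1,3,5}`, the
Nash equilibria of the expected zero-sum game with value `Σ_s θ(s) v^s` are exactly the
profiles with `q₁ = 0` and `q₂ ≤ min(supp θ)`. -/
theorem zero_sum_equilibria (θ : Fin 3 → ℝ) (hθ : θ ∈ stdSimplex ℝ (Fin 3)) :
    {q : ℝ × ℝ | q.1 ∈ Set.Icc (0 : ℝ) 6 ∧ q.2 ∈ Set.Icc (0 : ℝ) 6 ∧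
      (∀ x ∈ Set.Icc (0 : ℝ) 6,
        (∑ s, θ s * zsVal (zsS s) x q.2) ≤ ∑ s, θ s * zsVal (zsS s) q.1 q.2) ∧
      (∀ y ∈ Set.Icc (0 : ℝ) 6,
        (∑ s, θ s * zsVal (zsS s) q.1 q.2) ≤ ∑ s, θ s * zsVal (zsS s) q.1 y)}
    = {q : ℝ × ℝ | q.1 = 0 ∧ q.2 ∈ Set.Icc (0 : ℝ) 6 ∧
        q.2 ≤ sInf {x : ℝ | ∃ s, 0 < θ s ∧ zsS s = x}} := by
  have hσ : ∀ s, 0 ≤ zsS s := by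
    intro s; fin_cases s <;> norm_num [zsS]
  ext ⟨q₁, q₂⟩
  simp only [mem_ofPred_eq, le_sInf_support_iff hθ]
  exact isZeroSumEquilibriumOn_expectedZsVal_iff hθ hσ
end
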